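/- Let q = 2^n and G : 𝔽_q → 𝔽_q be any function. Then APN-def(G) = q − 12·|VF_G| + Σ_{a ∈ 𝔽_q^*} (3·w_{S_a^c} − χ_a) − 1. -/

import Mathlib

namespace APNPaper

open Finset

variable {F : Type*} [Field F] [Fintype F] [DecidableEq F]

/-- `δ_G(a,b)`: the number of `x` with `D_aG(x) = G(x) + G(x+a) = b`. -/
def delta (G : F → F) (a b : F) : ℕ :=
  (Finset.univ.filter fun x : F => G x + G (x + a) = b).card

/-- `∇_G(a,x) = δ_G(a, D_aG(x))`. -/
def nabla (G : F → F) (a x : F) : ℕ := delta G a (G x + G (x + a))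

/-- `G` is almost perfect nonlinear. -/
def IsAPN (G : F → F) : Prop := ∀ a : F, a ≠ 0 → ∀ b : F, delta G a b ≤ 2

/-- The derivative `D_aG` is 2-to-1, i.e. `G` satisfies property `(p_a)`. -/
def TwoToOne (G : F → F) (a : F) : Prop :=
  ∀ b : F, delta G a b = 0 ∨ delta G a b = 2

instance instDecTwoToOne (G : F → F) (a : F) : Decidable (TwoToOne G a) := by
  unfold TwoToOne; infer_instance

/-- The row spectrum `R-Spec_q(G)`. -/
def RSpec (G : F → F) : Finset F :=
  (Finset.univ.erase (0 : F)).filter fun a => TwoToOne G a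

/-- `S_a = {x : ∇_G(a,x) = 2}`. -/
def Sset (G : F → F) (a : F) : Finset F :=
  Finset.univ.filter fun x : F => nabla G a x = 2

/-- `w_{S_a^c} = Σ_{b : δ_G(a,b) > 2} (δ_G(a,b)/2)²`. -/
def wS (G : F → F) (a : F) : ℤ :=
  ∑ b : F, if 2 < delta G a b then ((delta G a b / 2 : ℕ) : ℤ) ^ 2 else 0

/-- `χ_a = 1` if `S_a = 𝔽_q`, and `0` otherwise. -/
def chi (G : F → F) (a : F) : ℤ :=
  if Sset G a = Finset.univ then 1 else 0

/-- `𝒟(G) = Σ_{a ≠ 0} (|S_a| − w_{S_a^c} + χ_a)`. -/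
def Dscr (G : F → F) : ℤ :=
  ∑ a ∈ Finset.univ.erase (0 : F), (((Sset G a).card : ℤ) - wS G a + chi G a)

/-- The APN-defect `APN-def(G) = q² − 1 − 𝒟(G)`. -/
def APNdef (G : F → F) : ℤ := (Fintype.card F : ℤ) ^ 2 - 1 - Dscr G

/-- The differential uniformity `δ_G`. -/
def diffUnif (G : F → F) : ℕ :=
  ((Finset.univ.erase (0 : F)) ×ˢ Finset.univ).sup fun p => delta G p.1 p.2

/-- The set of vanishing flats of `G`. -/
def VF (G : F → F) : Set (Finset F) :=
  {S | ∃ x y z : F, x ≠ y ∧ x ≠ z ∧ y ≠ z ∧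
    G x + G y + G z + G (x + y + z) = 0 ∧ S = ({x, y, z, x + y + z} : Finset F)}

/-- The absolute trace `Tr(z) = z + z² + ⋯ + z^{2^{n-1}}` (with values in `{0,1} ⊆ F`). -/
def Tr (n : ℕ) (z : F) : F := ∑ i ∈ Finset.range n, z ^ (2 ^ i)

/-- The modification `F_{0,α}` of the inverse function: the values of the inverse
function at `0` and `α` are swapped. -/
def Fmod (α : F) : F → F :=
  fun x => if x = 0 then α⁻¹ else if x = α then 0 else x⁻¹

/-!
Write `D_a x = G x + G (x + a)`. Through `a = x + z`, the triples `(x, y, z)` with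
`G x + G y + G z + G (x + y + z) = 0` correspond to the pairs `(x, y)` with `D_a x = D_a y`, so
there are `∑_a ∑_b δ_G(a, b)²` of them. The term `a = 0` contributes `q²`. For `a ≠ 0` every
`δ_G(a, b)` is even, since `x ↦ x + a` permutes each fibre of `D_a` without fixed points, hence
`∑_b δ_G(a, b)² = 4 w_{S_a^c} + 2 |S_a|`. On the other side, the `3q² - 2q` triples with a repeated
coordinate all qualify, and each vanishing flat arises from exactly `4 · 3 · 2 = 24` triples with
distinct coordinates. So `12 |VF_G| = ∑_{a ≠ 0} (2 w_{S_a^c} + |S_a|) - q (q - 1)`, and the claim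
is a rearrangement of this identity.
-/

section DistinctTriples

variable {α : Type*} [DecidableEq α]

def distinctTriples (s : Finset α) : Finset (α × α × α) :=
  (s ×ˢ s ×ˢ s).filter fun t => t.1 ≠ t.2.1 ∧ t.1 ≠ t.2.2 ∧ t.2.1 ≠ t.2.2

lemma mem_distinctTriples {s : Finset α} {t : α × α × α} :
    t ∈ distinctTriples s ↔
      (t.1 ∈ s ∧ t.2.1 ∈ s ∧ t.2.2 ∈ s) ∧ t.1 ≠ t.2.1 ∧ t.1 ≠ t.2.2 ∧ t.2.1 ≠ t.2.2 := by
  simp only [distinctTriples, mem_filter, mem_product]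

lemma card_distinctTriples (s : Finset α) :
    #(distinctTriples s) = #s * (#s - 1) * (#s - 2) := by
  have fiber : ∀ p ∈ s, #{t ∈ distinctTriples s | t.1 = p} = #(s.erase p).offDiag := by
    intro p hp
    refine card_nbij' (fun t => t.2) (fun qr => (p, qr)) ?_ ?_ ?_ ?_
    · rintro ⟨p', q, r⟩ ht
      simp only [coe_filter, mem_distinctTriples] at ht
      obtain ⟨⟨⟨-, hq, hr⟩, hpq, hpr, hqr⟩, rfl⟩ := ht
      simp [hq, hr, hqr, hpq.symm, hpr.symm]
    · rintro ⟨q, r⟩ hqr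
      obtain ⟨⟨hq, hpq⟩, ⟨hr, hpr⟩, hqr⟩ : (q ∈ s ∧ q ≠ p) ∧ (r ∈ s ∧ r ≠ p) ∧ q ≠ r := by
        simpa using hqr
      simp [mem_distinctTriples, hp, hq, hr, hqr, hpq.symm, hpr.symm]
    · rintro ⟨p', q, r⟩ ht
      obtain ⟨-, rfl⟩ : _ ∧ p' = p := by simpa using ht
      rfl
    · intro qr _
      rfl
  rw [card_eq_sum_card_fiberwise (f := Prod.fst) (t := s)
    (fun t ht => (mem_distinctTriples.1 ht).1.1), sum_congr rfl fiber]
  simp only [offDiag_card]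
  rw [sum_congr rfl fun p hp => by rw [card_erase_of_mem hp], sum_const, smul_eq_mul,
    ← Nat.mul_sub_one, mul_assoc, Nat.sub_sub]

end DistinctTriples

def diffCollisions (G : F → F) (a : F) : Finset (F × F) :=
  univ.filter fun p => G p.1 + G (p.1 + a) = G p.2 + G (p.2 + a)

lemma card_diffCollisions (G : F → F) (a : F) :
    #(diffCollisions G a) = ∑ b, delta G a b ^ 2 := by
  rw [card_eq_sum_card_fiberwise (f := fun p : F × F => G p.1 + G (p.1 + a)) (t := univ)
    (fun _ _ => mem_univ _)]
  refine sum_congr rfl fun b _ => ?_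
  rw [sq, delta, ← card_product]
  congr 1
  ext ⟨x, y⟩
  simp only [diffCollisions, mem_filter, mem_univ, true_and, mem_product]
  constructor
  · rintro ⟨hxy, rfl⟩
    exact ⟨rfl, hxy.symm⟩
  · rintro ⟨hx, hy⟩
    exact ⟨hx.trans hy.symm, hx⟩

lemma mem_Sset {G : F → F} {a x : F} : x ∈ Sset G a ↔ delta G a (G x + G (x + a)) = 2 := by
  unfold Sset
  rw [mem_filter, nabla]
  exact and_iff_right (mem_univ x)

lemma card_Sset (G : F → F) (a : F) :
    #(Sset G a) = ∑ b, if delta G a b = 2 then 2 else 0 := by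
  rw [card_eq_sum_card_fiberwise (f := fun x => G x + G (x + a)) (t := univ)
    (fun _ _ => mem_univ _)]
  refine sum_congr rfl fun b _ => ?_
  split_ifs with h
  · rw [← h, delta]
    congr 1
    ext x
    simp only [mem_filter, mem_univ, true_and, mem_Sset]
    exact ⟨And.right, fun hx => ⟨hx ▸ h, hx⟩⟩
  · rw [card_eq_zero, filter_eq_empty_iff]
    intro x hx hxb
    exact h (hxb ▸ mem_Sset.1 hx)

lemma sum_flat {K M : Type*} [CommRing K] [CharP K 2] [DecidableEq K] [AddCommMonoid M]
    (f : K → M) {p q r : K} (hpq : p ≠ q) (hpr : p ≠ r) (hqr : q ≠ r) :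
    ∑ u ∈ ({p, q, r, p + q + r} : Finset K), f u = f p + f q + f r + f (p + q + r) := by
  have hp : p + q + r ≠ p := fun h => hqr (CharTwo.add_eq_zero.1 (by linear_combination h))
  have hq : p + q + r ≠ q := fun h => hpr (CharTwo.add_eq_zero.1 (by linear_combination h))
  have hr : p + q + r ≠ r := fun h => hpq (CharTwo.add_eq_zero.1 (by linear_combination h))
  rw [sum_insert (by simp [hpq, hpr, hp.symm]), sum_insert (by simp [hqr, hq.symm]),
    sum_insert (by simp [hr.symm]), sum_singleton]
  abel

lemma card_eq_four_and_sum_eq_zero_of_mem_VF {K : Type*} [Field K] [CharP K 2] [DecidableEq K]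
    {G : K → K} {S : Finset K} (hS : S ∈ VF G) :
    #S = 4 ∧ ∑ u ∈ S, u = 0 ∧ ∑ u ∈ S, G u = 0 := by
  obtain ⟨x, y, z, hxy, hxz, hyz, hG, rfl⟩ := hS
  refine ⟨?_, ?_, ?_⟩
  · rw [card_eq_sum_ones, sum_flat _ hxy hxz hyz]
  · rw [sum_flat _ hxy hxz hyz]
    exact CharTwo.add_self_eq_zero _
  · rwa [sum_flat _ hxy hxz hyz]

lemma eq_flat_of_card_eq_four {K : Type*} [CommRing K] [CharP K 2] [DecidableEq K]
    {S : Finset K} (hS : #S = 4) (hsum : ∑ u ∈ S, u = 0)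
    {p q r : K} (hp : p ∈ S) (hq : q ∈ S) (hr : r ∈ S)
    (hpq : p ≠ q) (hpr : p ≠ r) (hqr : q ≠ r) :
    S = {p, q, r, p + q + r} := by
  set T : Finset K := {p, q, r}
  have hTS : T ⊆ S := by simp [T, insert_subset_iff, hp, hq, hr]
  have hT : #T = 3 := card_eq_three.2 ⟨p, q, r, hpq, hpr, hqr, rfl⟩
  obtain ⟨u, hu⟩ := card_eq_one.1 (by rw [card_sdiff_of_subset hTS, hS, hT] : #(S \ T) = 1)
  have huT : u ∉ T := (mem_sdiff.1 (hu ▸ mem_singleton_self u)).2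
  have hSu : S = insert u T := by rw [← sdiff_union_of_subset hTS, hu, insert_eq]
  have hu_eq : u = p + q + r := by
    rw [hSu, sum_insert huT, sum_insert (by simp [hpq, hpr]), sum_pair hqr] at hsum
    exact CharTwo.add_eq_zero.1 (by linear_combination hsum)
  rw [hSu, hu_eq]
  ext
  simp only [T, mem_insert, mem_singleton]
  tauto

def sumZeroTriples (G : F → F) : Finset (F × F × F) :=
  univ.filter fun t => G t.1 + G t.2.1 + G t.2.2 + G (t.1 + t.2.1 + t.2.2) = 0

def tripleFlat (t : F × F × F) : Finset F := {t.1, t.2.1, t.2.2, t.1 + t.2.1 + t.2.2}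

section CharTwo

variable [CharP F 2]

lemma delta_even (G : F → F) {a : F} (ha : a ≠ 0) (b : F) : Even (delta G a b) := by
  rw [delta, ← ZMod.natCast_eq_zero_iff_even, card_eq_sum_ones, Nat.cast_sum, Nat.cast_one]
  refine sum_involution (fun x _ => x + a) (fun _ _ => by decide) (fun x _ _ => ?_)
    (fun x hx => ?_) (fun x _ => CharTwo.add_cancel_right x a)
  · simpa using ha
  · simp only [mem_filter, mem_univ, true_and] at hx ⊢
    rwa [CharTwo.add_cancel_right, add_comm]

lemma sum_delta_sq (G : F → F) {a : F} (ha : a ≠ 0) :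
    ∑ b, (delta G a b : ℤ) ^ 2 = 4 * wS G a + 2 * #(Sset G a) := by
  rw [card_Sset, wS, Nat.cast_sum, mul_sum, mul_sum, ← sum_add_distrib]
  refine sum_congr rfl fun b _ => ?_
  obtain ⟨k, hk⟩ := (delta_even G ha b).two_dvd
  rw [hk, Nat.mul_div_cancel_left k two_pos]
  rcases (show k = 0 ∨ k = 1 ∨ 2 ≤ k by omega) with rfl | rfl | hk2
  · simp
  · norm_num
  · rw [if_pos (by omega), if_neg (by omega)]
    push_cast
    ring

lemma diffCollisions_zero (G : F → F) : diffCollisions G 0 = univ := by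
  ext p
  simp [diffCollisions, CharTwo.add_self_eq_zero]

lemma card_sumZeroTriples (G : F → F) : #(sumZeroTriples G) = ∑ a, #(diffCollisions G a) := by
  rw [card_eq_sum_card_fiberwise (f := fun t : F × F × F => t.1 + t.2.2) (t := univ)
    (fun _ _ => mem_univ _)]
  refine sum_congr rfl fun a _ =>
    card_nbij' (fun t => (t.1, t.2.1)) (fun p => (p.1, p.2, p.1 + a)) ?_ ?_ ?_ ?_
  · rintro ⟨x, y, z⟩ h
    obtain ⟨hG, rfl⟩ : G x + G y + G z + G (x + y + z) = 0 ∧ x + z = a := by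
      simpa [sumZeroTriples] using h
    simp only [mem_coe, diffCollisions, mem_filter, mem_univ, true_and]
    rw [CharTwo.add_cancel_left, ← CharTwo.add_eq_zero, show y + (x + z) = x + y + z by ring]
    linear_combination hG
  · rintro ⟨x, y⟩ h
    have hxy : G x + G (x + a) = G y + G (y + a) := by simpa [diffCollisions] using h
    simp only [mem_coe, sumZeroTriples, mem_filter, mem_univ, true_and,
      CharTwo.add_cancel_left, and_true]
    rw [show x + y + (x + a) = x + x + (y + a) by ring, CharTwo.add_self_eq_zero, zero_add,
      ← CharTwo.add_eq_zero.2 hxy]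
    ring
  · rintro ⟨x, y, z⟩ h
    obtain ⟨-, rfl⟩ : _ ∧ x + z = a := by simpa using h
    simp [CharTwo.add_cancel_left]
  · intro p _
    rfl

lemma card_sumZeroTriples_eq_card_inter_add (G : F → F) :
    #(sumZeroTriples G) =
      #(sumZeroTriples G ∩ distinctTriples univ) + #(distinctTriples (univ : Finset F))ᶜ := by
  have degenerate : sumZeroTriples G \ distinctTriples univ = (distinctTriples univ)ᶜ := by
    ext ⟨x, y, z⟩
    simp only [mem_sdiff, mem_compl, sumZeroTriples, mem_filter, mem_univ, true_and,
      mem_distinctTriples, and_iff_right_iff_imp, not_and_or, not_not]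
    rintro (rfl | rfl | rfl) <;>
      simp [add_right_comm, CharTwo.add_self_eq_zero, CharTwo.add_cancel_right]
  rw [← card_inter_add_card_sdiff (sumZeroTriples G) (distinctTriples univ), degenerate]

lemma filter_tripleFlat_eq {G : F → F} {S : Finset F} (hS : S ∈ VF G) :
    {t ∈ sumZeroTriples G ∩ distinctTriples univ | tripleFlat t = S} = distinctTriples S := by
  obtain ⟨h4, hsum, hGsum⟩ := card_eq_four_and_sum_eq_zero_of_mem_VF hS
  ext ⟨p, q, r⟩
  simp only [mem_filter, mem_inter, sumZeroTriples, mem_univ, true_and, mem_distinctTriples,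
    and_self]
  constructor
  · rintro ⟨⟨-, hpq, hpr, hqr⟩, rfl⟩
    simp [tripleFlat, hpq, hpr, hqr]
  · rintro ⟨⟨hp, hq, hr⟩, hpq, hpr, hqr⟩
    have hSeq := eq_flat_of_card_eq_four h4 hsum hp hq hr hpq hpr hqr
    rw [hSeq, sum_flat _ hpq hpr hqr] at hGsum
    exact ⟨⟨hGsum, hpq, hpr, hqr⟩, hSeq.symm⟩

lemma card_sumZeroTriples_inter_distinctTriples (G : F → F) :
    #(sumZeroTriples G ∩ distinctTriples univ) = 24 * (VF G).ncard := by
  have hmaps : ∀ t ∈ sumZeroTriples G ∩ distinctTriples univ,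
      tripleFlat t ∈ (VF G).toFinite.toFinset := by
    intro t ht
    simp only [mem_inter, sumZeroTriples, mem_filter, mem_univ, true_and,
      mem_distinctTriples, and_self] at ht
    exact (Set.Finite.mem_toFinset _).2 ⟨t.1, t.2.1, t.2.2, ht.2.1, ht.2.2.1, ht.2.2.2, ht.1, rfl⟩
  rw [Set.ncard_eq_toFinset_card (VF G), card_eq_sum_card_fiberwise hmaps]
  rw [sum_congr rfl fun S hS => by
    rw [filter_tripleFlat_eq ((Set.Finite.mem_toFinset _).1 hS), card_distinctTriples,
      (card_eq_four_and_sum_eq_zero_of_mem_VF ((Set.Finite.mem_toFinset _).1 hS)).1]]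
  rw [sum_const, smul_eq_mul, mul_comm]

lemma twelve_mul_ncard_VF (G : F → F) :
    12 * ((VF G).ncard : ℤ) =
      ∑ a ∈ univ.erase (0 : F), (2 * wS G a + #(Sset G a)) -
        Fintype.card F * (Fintype.card F - 1) := by
  have hq : 2 ≤ Fintype.card F := Fintype.one_lt_card
  have hcollisions : ∀ a ∈ univ.erase (0 : F),
      (#(diffCollisions G a) : ℤ) = 4 * wS G a + 2 * #(Sset G a) := fun a ha => by
    rw [card_diffCollisions, Nat.cast_sum]
    push_cast
    exact sum_delta_sq G (ne_of_mem_erase ha)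
  have hsplit := card_sumZeroTriples_eq_card_inter_add G
  have hcompl := card_compl_add_card (distinctTriples (univ : Finset F))
  rw [card_sumZeroTriples, ← add_sum_erase _ _ (mem_univ 0), diffCollisions_zero,
    card_sumZeroTriples_inter_distinctTriples, card_univ, Fintype.card_prod] at hsplit
  rw [card_distinctTriples, Fintype.card_prod, Fintype.card_prod, card_univ] at hcompl
  zify [hq, hq.trans' one_le_two] at hsplit hcompl
  rw [sum_congr rfl hcollisions] at hsplit
  simp only [sum_add_distrib, ← mul_sum] at hsplit ⊢
  linarith

end CharTwo

theorem stmt_17_general (n : ℕ)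
    [CharP F 2] (hcard : Fintype.card F = 2 ^ n)
    (G : F → F) :
    APNdef G = (2 : ℤ) ^ n - 12 * ((VF G).ncard : ℤ) +
      (∑ a ∈ Finset.univ.erase (0 : F), (3 * wS G a - chi G a)) - 1 := by
  have hq : (Fintype.card F : ℤ) = 2 ^ n := by exact_mod_cast hcard
  have hflats := twelve_mul_ncard_VF G
  rw [APNdef, Dscr, ← hq]
  simp only [sum_add_distrib, sum_sub_distrib, ← mul_sum] at hflats ⊢
  linear_combination hflats

/-- relation between the APN-defect and the number of vanishing flats. -/
theorem stmt_17 (n : ℕ) (hn : 0 < n)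
    [CharP F 2] (hcard : Fintype.card F = 2 ^ n)
    (G : F → F) :
    APNdef G = (2 : ℤ) ^ n - 12 * ((VF G).ncard : ℤ) +
      (∑ a ∈ Finset.univ.erase (0 : F), (3 * wS G a - chi G a)) - 1 :=
  stmt_17_general n hcard G

end APNPaper
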